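/- Let H ≥ 2 be an integer and I = {0,1,2} ∪ {2H}. Then for every integer h ≥ H, |hI| = H² + 2H(h - H + 1). -/

import Mathlib

open Finset Pointwise

/-- `hsum h A` is the `h`-fold sumset of `A` (pointwise sum of `h` copies). -/
def hsum (h : ℕ) (A : Finset ℤ) : Finset ℤ := ∑ _i ∈ Finset.range h, A

/-- `transl t A` is the translate `t + A`. -/
def transl (t : ℤ) (A : Finset ℤ) : Finset ℤ := A.image (t + ·)

/-! Counting the copies of `d = 2H` among the `h` summands, `hI` is the union over `b ≤ h` of the
intervals `[b d, b d + 2 (h - b)]`. Since `d ≥ 2`, cutting this union into the blocks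
`[q d, (q + 1) d)` leaves in block `q` exactly an initial segment of length
`min (2 (h - q) + 1) d`, so `|hI| = ∑_{j ≤ h} min (2 j + 1) (2 H) = H² + 2 H (h - H + 1)`. -/

lemma hsum_zero (A : Finset ℤ) : hsum 0 A = {0} := sum_range_zero _

lemma hsum_succ (n : ℕ) (A : Finset ℤ) : hsum (n + 1) A = hsum n A + A := sum_range_succ _ _

lemma hsum_zero_one_two (n : ℕ) : hsum n {0, 1, 2} = Icc 0 (2 * (n : ℤ)) := by
  induction n with
  | zero => simp [hsum_zero]
  | succ n ih =>
    ext x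
    simp only [hsum_succ, ih, mem_add, mem_Icc, mem_insert, mem_singleton]
    constructor
    · rintro ⟨y, hy, z, hz, rfl⟩
      omega
    · intro hx
      by_cases hxn : x ≤ 2 * n
      · exact ⟨x, by omega, 0, by simp, by simp⟩
      · exact ⟨2 * n, by omega, x - 2 * n, by omega, by ring⟩

lemma mem_hsum_union_singleton {A : Finset ℤ} {d : ℤ} {n : ℕ} {x : ℤ} :
    x ∈ hsum n (A ∪ {d}) ↔ ∃ b ≤ n, x - b * d ∈ hsum (n - b) A := by
  induction n generalizing x with
  | zero => simp [hsum_zero]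
  | succ n ih =>
    simp only [hsum_succ, mem_add, mem_union, mem_singleton, ih]
    constructor
    · rintro ⟨y, ⟨b, hb, hy⟩, z, hz | rfl, rfl⟩
      · refine ⟨b, by omega, ?_⟩
        rw [Nat.sub_add_comm hb, hsum_succ]
        exact mem_add.mpr ⟨_, hy, z, hz, by ring⟩
      · refine ⟨b + 1, by omega, ?_⟩
        rwa [Nat.add_sub_add_right, Nat.cast_succ, add_mul, one_mul, add_sub_add_right_eq_sub]
    · rintro ⟨_ | b, hb, hx⟩
      · rw [Nat.sub_zero, hsum_succ] at hx
        obtain ⟨y, hy, a, ha, hya⟩ := mem_add.mp hx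
        exact ⟨y, ⟨0, by omega, by simpa using hy⟩, a, .inl ha, by simpa using hya⟩
      · refine ⟨x - d, ⟨b, by omega, ?_⟩, d, .inr rfl, by ring⟩
        rwa [Nat.add_sub_add_right, Nat.cast_succ, add_mul, one_mul, sub_add_eq_sub_sub_swap] at hx

lemma mem_hsum_iff {d x : ℤ} {n : ℕ} :
    x ∈ hsum n ({0, 1, 2} ∪ {d}) ↔ ∃ b ≤ n, 0 ≤ x - b * d ∧ x - b * d ≤ 2 * ((n : ℤ) - b) := by
  simp only [mem_hsum_union_singleton, hsum_zero_one_two, mem_Icc]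
  refine exists_congr fun b => and_congr_right fun hb => ?_
  rw [Nat.cast_sub hb]

lemma hsum_eq_biUnion_Ico {d : ℕ} (hd : 2 ≤ d) (n : ℕ) :
    hsum n ({0, 1, 2} ∪ {(d : ℤ)}) =
      (range (n + 1)).biUnion fun q =>
        Ico ((q * d : ℕ) : ℤ) ((q * d + min (2 * (n - q) + 1) d : ℕ) : ℤ) := by
  ext x
  simp only [mem_hsum_iff, mem_biUnion, mem_range, mem_Ico]
  constructor
  · rintro ⟨b, hb, hx0, hxb⟩
    have hd0 : (0 : ℤ) < d := by omega
    obtain ⟨q, hq⟩ : ∃ q : ℕ, x / d = q :=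
      Int.eq_ofNat_of_zero_le (Int.ediv_nonneg (by nlinarith) hd0.le)
    have hbq : (b : ℤ) ≤ q := hq ▸ Int.le_ediv_of_mul_le hd0 (by linarith)
    have hdiv := Int.ediv_mul_add_emod x d
    have hr0 := Int.emod_nonneg x hd0.ne'
    have hrd := Int.emod_lt_of_pos x hd0
    rw [hq] at hdiv
    -- `x - b d = (q - b) d + x % d` and `(q - b) d ≥ 2 (q - b)`
    have hr : x % d ≤ 2 * ((n : ℤ) - q) := by nlinarith
    refine ⟨q, by omega, by push_cast; omega, ?_⟩
    push_cast
    omega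
  · rintro ⟨q, hq, hx0, hxq⟩
    refine ⟨q, by omega, ?_, ?_⟩ <;> push_cast at hx0 hxq ⊢ <;> omega

lemma card_biUnion_Ico_mul {d : ℕ} (s : Finset ℕ) (c : ℕ → ℕ) (hc : ∀ q ∈ s, c q ≤ d) :
    (s.biUnion fun q => Ico ((q * d : ℕ) : ℤ) ((q * d + c q : ℕ) : ℤ)).card = ∑ q ∈ s, c q := by
  rw [card_biUnion]
  · refine sum_congr rfl fun q _ => ?_
    simp
  · intro q hq q' hq' hne
    rw [Function.onFun, disjoint_left]
    intro x hx hx'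
    simp only [mem_Ico] at hx hx'
    have hcq := hc q hq
    have hcq' := hc q' hq'
    rcases Nat.lt_or_gt_of_ne hne with h | h <;>
    · have := Nat.mul_le_mul_right d (Nat.succ_le_of_lt h)
      rw [Nat.succ_mul] at this
      omega

lemma sum_range_two_mul_add_one (n : ℕ) : ∑ j ∈ range n, (2 * j + 1) = n ^ 2 := by
  induction n with
  | zero => simp
  | succ n ih => rw [sum_range_succ, ih]; ring

lemma sum_range_min_two_mul_add_one {H m : ℕ} (hHm : H ≤ m) :
    ∑ j ∈ range m, min (2 * j + 1) (2 * H) = H ^ 2 + 2 * H * (m - H) := by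
  rw [← sum_range_add_sum_Ico _ hHm,
    sum_congr rfl fun j hj => min_eq_left (by rw [mem_range] at hj; omega),
    sum_congr rfl fun j hj => min_eq_right (by rw [mem_Ico] at hj; omega),
    sum_range_two_mul_add_one, sum_const, Nat.card_Ico, smul_eq_mul, mul_comm]

theorem stmt_6 (H : ℕ) (hH : 2 ≤ H) (h : ℕ) (hhH : H ≤ h) :
    (hsum h ({0, 1, 2} ∪ {2 * (H : ℤ)})).card = H ^ 2 + 2 * H * (h - H + 1) := by
  have hreflect : ∑ q ∈ range (h + 1), min (2 * (h - q) + 1) (2 * H) =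
      ∑ j ∈ range (h + 1), min (2 * j + 1) (2 * H) := by
    rw [← sum_range_reflect (fun j => min (2 * j + 1) (2 * H))]
    simp only [Nat.add_sub_cancel]
  rw [show 2 * (H : ℤ) = (2 * H : ℕ) by push_cast; rfl, hsum_eq_biUnion_Ico (by omega),
    card_biUnion_Ico_mul _ _ fun q _ => min_le_right _ _, hreflect,
    sum_range_min_two_mul_add_one (by omega), Nat.sub_add_comm hhH]
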